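/- arXiv:2110.01059 — 2 statements merged into one kernel-verified Lean document; each statement's English description precedes it below -/
import Mathlib

section
/- For every integer g with g > 86, the images of a₁², a₁a₂′, a₂, a₂′², and c₂ in S(g) form a ℚ-basis of the weighted-degree-2 component S(g)_2; in particular dim_ℚ S(g)_2 = 5. -/
open MvPolynomial

noncomputable section

/-- The polynomial ring `ℚ[a₁, a₂′, a₂, c₂]`. -/
abbrev P4 : Type := MvPolynomial (Fin 4) ℚ

/-- Weights: `a₁` and `a₂′` have weight 1; `a₂` and `c₂` have weight 2. -/
def wt : Fin 4 → ℕ := ![1, 1, 2, 2]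

def a1 : P4 := X 0
def a2' : P4 := X 1
def a2 : P4 := X 2
def c2 : P4 := X 3

/-- The relation `r₁`. -/
def r1 (g : ℤ) : P4 :=
  C (1064*(g:ℚ) + 3610) * a1^3 - C (1074 : ℚ) * (a1^2 * a2')
    - C (2148*(g:ℚ) + 7272) * (a1 * a2) + C (2160 : ℚ) * (a2 * a2')
    - C (1064*(g:ℚ)^3 + 10830*(g:ℚ)^2 + 36680*(g:ℚ) + 41360) * (a1 * c2)
    + C (1074*(g:ℚ)^2 + 7272*(g:ℚ) + 12288) * (a2' * c2)

/-- The relation `r₂`. -/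
def r2 (g : ℤ) : P4 :=
  - C (6412*(g:ℚ) + 21255) * a1^3 + C (6207 : ℚ) * (a1^2 * a2')
    + C (12414*(g:ℚ) + 40896) * (a1 * a2) - C (11880 : ℚ) * (a2 * a2')
    + C (6412*(g:ℚ)^3 + 63765*(g:ℚ)^2 + 211540*(g:ℚ) + 234480) * (a1 * c2)
    - C (6207*(g:ℚ)^2 + 40896*(g:ℚ) + 68184) * (a2' * c2)

/-- The relation `r₃`. -/
def r3 (g : ℤ) : P4 :=
  - C (22845*(g:ℚ) + 67763) * a1^4 + C (18141 : ℚ) * (a1^3 * a2')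
    + C (54423*(g:ℚ) + 146550) * (a1^2 * a2) - C (35640 : ℚ) * (a1 * a2 * a2')
    + C (45690*(g:ℚ)^3 + 406578*(g:ℚ)^2 + 1184220*(g:ℚ) + 1123060) * (a1^2 * c2)
    - C (54423*(g:ℚ)^2 + 293100*(g:ℚ) + 372648) * (a1 * a2' * c2)
    + C (17820*(g:ℚ) + 24840) * (a2'^2 * c2)
    - C (17820*(g:ℚ) + 24840) * (a2^2)
    - C (18141*(g:ℚ)^3 + 146550*(g:ℚ)^2 + 372648*(g:ℚ) + 283824) * (a2 * c2)
    - C (4569*(g:ℚ)^5 + 67763*(g:ℚ)^4 + 394740*(g:ℚ)^3 + 1123060*(g:ℚ)^2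
        + 1546176*(g:ℚ) + 810432) * (c2^2)

/-- The relation `r₄`. -/
def r4 (g : ℤ) : P4 :=
  C (133 : ℚ) * a1^4 - C (537 : ℚ) * (a1^2 * a2)
    - C (798*(g:ℚ)^2 + 5415*(g:ℚ) + 9170) * (a1^2 * c2)
    + C (1074*(g:ℚ) + 3636) * (a1 * a2' * c2)
    - C (540 : ℚ) * (a2'^2 * c2) + C (540 : ℚ) * (a2^2)
    + C (537*(g:ℚ)^2 + 3636*(g:ℚ) + 6144) * (a2 * c2)
    + C (133*(g:ℚ)^4 + 1805*(g:ℚ)^3 + 9170*(g:ℚ)^2 + 20680*(g:ℚ) + 17472) * (c2^2)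

/-- The relation `r₅`. -/
def r5 (g : ℤ) : P4 :=
  - C (18545*(g:ℚ) + 68407) * a1^4 + C (15261 : ℚ) * (a1^3 * a2')
    + C (45783*(g:ℚ) + 175866) * (a1^2 * a2) - C (31320 : ℚ) * (a1 * a2 * a2')
    + C (37090*(g:ℚ)^3 + 410442*(g:ℚ)^2 + 1499460*(g:ℚ) + 1811300) * (a1^2 * c2)
    - C (45783*(g:ℚ)^2 + 351732*(g:ℚ) + 662976) * (a1 * a2' * c2)
    + C (15660*(g:ℚ) + 72360) * (a2'^2 * c2)
    - C (15660*(g:ℚ) + 72360) * (a2^2)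
    - C (15261*(g:ℚ)^3 + 175866*(g:ℚ)^2 + 662976*(g:ℚ) + 822096) * (a2 * c2)
    - C (3709*(g:ℚ)^5 + 68407*(g:ℚ)^4 + 499820*(g:ℚ)^3 + 1811300*(g:ℚ)^2
        + 3260256*(g:ℚ) + 2334528) * (c2^2)

/-- The ideal `J(g) = (r₁, r₂, r₃, r₄, r₅)`. -/
def Jg (g : ℤ) : Ideal P4 := Ideal.span {r1 g, r2 g, r3 g, r4 g, r5 g}

/-- The quotient map `P → S(g) = P/J(g)`, as a `ℚ`-linear map. -/
def Smk (g : ℤ) : P4 →ₗ[ℚ] P4 ⧸ Jg g := (Ideal.Quotient.mkₐ ℚ (Jg g)).toLinearMap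

/-- `S(g)_i`: the image in `S(g)` of the weighted-degree-`i` homogeneous polynomials. -/
def SComp (g : ℤ) (i : ℕ) : Submodule ℚ (P4 ⧸ Jg g) :=
  (weightedHomogeneousSubmodule ℚ wt i).map (Smk g)

namespace HurwitzAux

open Finsupp

/-! ### Basic weighted-homogeneity lemmas -/

lemma hwa1 : IsWeightedHomogeneous wt a1 1 := by
  have h : wt 0 = 1 := by simp [wt]
  exact h ▸ isWeightedHomogeneous_X ℚ wt 0

lemma hwa2' : IsWeightedHomogeneous wt a2' 1 := by
  have h : wt 1 = 1 := by simp [wt]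
  exact h ▸ isWeightedHomogeneous_X ℚ wt 1

lemma hwa2 : IsWeightedHomogeneous wt a2 2 := by
  have h : wt 2 = 2 := by simp [wt]
  exact h ▸ isWeightedHomogeneous_X ℚ wt 2

lemma hwc2 : IsWeightedHomogeneous wt c2 2 := by
  have h : wt 3 = 2 := by simp [wt]
  exact h ▸ isWeightedHomogeneous_X ℚ wt 3

lemma hw_pow {p : P4} {n : ℕ} (h : IsWeightedHomogeneous wt p n) (k : ℕ) :
    IsWeightedHomogeneous wt (p ^ k) (k * n) := by
  induction k with
  | zero => simpa using isWeightedHomogeneous_one ℚ wt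
  | succ k ih =>
    rw [pow_succ]
    exact (Nat.succ_mul k n) ▸ ih.mul h

lemma Cmul (q : ℚ) {p : P4} {n : ℕ} (h : IsWeightedHomogeneous wt p n) :
    IsWeightedHomogeneous wt (C q * p) n :=
  (zero_add n) ▸ (isWeightedHomogeneous_C wt q).mul h

lemma HA13 : IsWeightedHomogeneous wt (a1^3) 3 := hw_pow hwa1 3
lemma HA12A2' : IsWeightedHomogeneous wt (a1^2 * a2') 3 := (hw_pow hwa1 2).mul hwa2'
lemma HA1A2 : IsWeightedHomogeneous wt (a1 * a2) 3 := hwa1.mul hwa2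
lemma HA2A2' : IsWeightedHomogeneous wt (a2 * a2') 3 := hwa2.mul hwa2'
lemma HA1C2 : IsWeightedHomogeneous wt (a1 * c2) 3 := hwa1.mul hwc2
lemma HA2'C2 : IsWeightedHomogeneous wt (a2' * c2) 3 := hwa2'.mul hwc2
lemma HA14 : IsWeightedHomogeneous wt (a1^4) 4 := hw_pow hwa1 4
lemma HA13A2' : IsWeightedHomogeneous wt (a1^3 * a2') 4 := (hw_pow hwa1 3).mul hwa2'
lemma HA12A2 : IsWeightedHomogeneous wt (a1^2 * a2) 4 := (hw_pow hwa1 2).mul hwa2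
lemma HA1A2A2' : IsWeightedHomogeneous wt (a1 * a2 * a2') 4 := (hwa1.mul hwa2).mul hwa2'
lemma HA12C2 : IsWeightedHomogeneous wt (a1^2 * c2) 4 := (hw_pow hwa1 2).mul hwc2
lemma HA1A2'C2 : IsWeightedHomogeneous wt (a1 * a2' * c2) 4 := (hwa1.mul hwa2').mul hwc2
lemma HA2'2C2 : IsWeightedHomogeneous wt (a2'^2 * c2) 4 := (hw_pow hwa2' 2).mul hwc2
lemma HA22 : IsWeightedHomogeneous wt (a2^2) 4 := hw_pow hwa2 2
lemma HA2C2 : IsWeightedHomogeneous wt (a2 * c2) 4 := hwa2.mul hwc2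
lemma HC22 : IsWeightedHomogeneous wt (c2^2) 4 := hw_pow hwc2 2

lemma hr1 (g : ℤ) : IsWeightedHomogeneous wt (r1 g) 3 := by
  show r1 g ∈ weightedHomogeneousSubmodule ℚ wt 3
  unfold r1
  exact Submodule.add_mem _
    (Submodule.sub_mem _
      (Submodule.add_mem _
        (Submodule.sub_mem _
          (Submodule.sub_mem _ (Cmul _ HA13) (Cmul _ HA12A2'))
          (Cmul _ HA1A2))
        (Cmul _ HA2A2'))
      (Cmul _ HA1C2))
    (Cmul _ HA2'C2)

lemma hr2 (g : ℤ) : IsWeightedHomogeneous wt (r2 g) 3 := by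
  show r2 g ∈ weightedHomogeneousSubmodule ℚ wt 3
  unfold r2
  simp only [neg_mul]
  exact Submodule.sub_mem _
    (Submodule.add_mem _
      (Submodule.sub_mem _
        (Submodule.add_mem _
          (Submodule.add_mem _ (Submodule.neg_mem _ (Cmul _ HA13)) (Cmul _ HA12A2'))
          (Cmul _ HA1A2))
        (Cmul _ HA2A2'))
      (Cmul _ HA1C2))
    (Cmul _ HA2'C2)

lemma hr3 (g : ℤ) : IsWeightedHomogeneous wt (r3 g) 4 := by
  show r3 g ∈ weightedHomogeneousSubmodule ℚ wt 4
  unfold r3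
  simp only [neg_mul]
  exact Submodule.sub_mem _
    (Submodule.sub_mem _
      (Submodule.sub_mem _
        (Submodule.add_mem _
          (Submodule.sub_mem _
            (Submodule.add_mem _
              (Submodule.sub_mem _
                (Submodule.add_mem _
                  (Submodule.add_mem _ (Submodule.neg_mem _ (Cmul _ HA14)) (Cmul _ HA13A2'))
                  (Cmul _ HA12A2))
                (Cmul _ HA1A2A2'))
              (Cmul _ HA12C2))
            (Cmul _ HA1A2'C2))
          (Cmul _ HA2'2C2))
        (Cmul _ HA22))
      (Cmul _ HA2C2))
    (Cmul _ HC22)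

lemma hr4 (g : ℤ) : IsWeightedHomogeneous wt (r4 g) 4 := by
  show r4 g ∈ weightedHomogeneousSubmodule ℚ wt 4
  unfold r4
  exact Submodule.add_mem _
    (Submodule.add_mem _
      (Submodule.add_mem _
        (Submodule.sub_mem _
          (Submodule.add_mem _
            (Submodule.sub_mem _
              (Submodule.sub_mem _ (Cmul _ HA14) (Cmul _ HA12A2))
              (Cmul _ HA12C2))
            (Cmul _ HA1A2'C2))
          (Cmul _ HA2'2C2))
        (Cmul _ HA22))
      (Cmul _ HA2C2))
    (Cmul _ HC22)

lemma hr5 (g : ℤ) : IsWeightedHomogeneous wt (r5 g) 4 := by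
  show r5 g ∈ weightedHomogeneousSubmodule ℚ wt 4
  unfold r5
  simp only [neg_mul]
  exact Submodule.sub_mem _
    (Submodule.sub_mem _
      (Submodule.sub_mem _
        (Submodule.add_mem _
          (Submodule.sub_mem _
            (Submodule.add_mem _
              (Submodule.sub_mem _
                (Submodule.add_mem _
                  (Submodule.add_mem _ (Submodule.neg_mem _ (Cmul _ HA14)) (Cmul _ HA13A2'))
                  (Cmul _ HA12A2))
                (Cmul _ HA1A2A2'))
              (Cmul _ HA12C2))
            (Cmul _ HA1A2'C2))
          (Cmul _ HA2'2C2))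
        (Cmul _ HA22))
      (Cmul _ HA2C2))
    (Cmul _ HC22)

/-! ### The ideal of polynomials with no terms of weighted degree ≤ 2 -/

def lowI : Ideal P4 where
  carrier := {q | ∀ d : Fin 4 →₀ ℕ, Finsupp.weight wt d ≤ 2 → MvPolynomial.coeff d q = 0}
  add_mem' := by
    intro a b ha hb d hd
    simp [MvPolynomial.coeff_add, ha d hd, hb d hd]
  zero_mem' := by intro d _; simp
  smul_mem' := by
    intro c q hq d hd
    rw [smul_eq_mul, MvPolynomial.coeff_mul]
    apply Finset.sum_eq_zero
    rintro ⟨u, v⟩ huv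
    have h1 : u + v = d := Finset.HasAntidiagonal.mem_antidiagonal.mp huv
    have h2 : Finsupp.weight wt v ≤ Finsupp.weight wt d := by
      rw [← h1, map_add]; exact le_add_self
    rw [hq v (le_trans h2 hd), mul_zero]

lemma mem_lowI {q : P4} :
    q ∈ lowI ↔ ∀ d : Fin 4 →₀ ℕ, Finsupp.weight wt d ≤ 2 → MvPolynomial.coeff d q = 0 :=
  Iff.rfl

lemma Jg_le_lowI (g : ℤ) : Jg g ≤ lowI := by
  rw [Jg, Ideal.span_le]
  have key : ∀ (p : P4) (n : ℕ), 3 ≤ n → IsWeightedHomogeneous wt p n → p ∈ lowI := by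
    intro p n hn hp
    rw [mem_lowI]
    intro d hd
    by_contra hne
    have := hp hne
    omega
  rintro x hx
  simp only [Set.mem_insert_iff, Set.mem_singleton_iff] at hx
  rcases hx with h | h | h | h | h <;> subst h
  · exact key _ 3 (by norm_num) (hr1 g)
  · exact key _ 3 (by norm_num) (hr2 g)
  · exact key _ 4 (by norm_num) (hr3 g)
  · exact key _ 4 (by norm_num) (hr4 g)
  · exact key _ 4 (by norm_num) (hr5 g)

/-! ### The five exponent vectors of weight 2 -/

def e0 : Fin 4 →₀ ℕ := Finsupp.single 0 2
def e1 : Fin 4 →₀ ℕ := Finsupp.single 0 1 + Finsupp.single 1 1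
def e2 : Fin 4 →₀ ℕ := Finsupp.single 2 1
def e3 : Fin 4 →₀ ℕ := Finsupp.single 1 2
def e4 : Fin 4 →₀ ℕ := Finsupp.single 3 1

lemma m0eq : a1^2 = monomial e0 1 := by
  rw [a1, X_pow_eq_monomial]; rfl
lemma m1eq : a1 * a2' = monomial e1 1 := by
  rw [a1, a2']
  rw [show (X 0 : P4) = monomial (Finsupp.single 0 1) 1 from rfl,
      show (X 1 : P4) = monomial (Finsupp.single 1 1) 1 from rfl, monomial_mul]
  norm_num [e1]
lemma m2eq : a2 = monomial e2 1 := rfl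
lemma m3eq : a2'^2 = monomial e3 1 := by
  rw [a2', X_pow_eq_monomial]; rfl
lemma m4eq : c2 = monomial e4 1 := rfl

lemma weight_apply' (d : Fin 4 →₀ ℕ) :
    Finsupp.weight wt d = d 0 + d 1 + 2 * d 2 + 2 * d 3 := by
  rw [Finsupp.weight_apply, Finsupp.sum_fintype]
  · rw [Fin.sum_univ_four]
    simp [wt]
    ring
  · intro i; simp

lemma we0 : Finsupp.weight wt e0 = 2 := by
  rw [weight_apply']; simp [e0, Finsupp.single_apply]
lemma we1 : Finsupp.weight wt e1 = 2 := by
  rw [weight_apply']; simp [e1, Finsupp.single_apply]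
lemma we2 : Finsupp.weight wt e2 = 2 := by
  rw [weight_apply']; simp [e2, Finsupp.single_apply]
lemma we3 : Finsupp.weight wt e3 = 2 := by
  rw [weight_apply']; simp [e3, Finsupp.single_apply]
lemma we4 : Finsupp.weight wt e4 = 2 := by
  rw [weight_apply']; simp [e4, Finsupp.single_apply]

lemma ne01 : e0 ≠ e1 := fun h => by
  have := DFunLike.congr_fun h 1; simp [e0, e1, Finsupp.single_apply] at this
lemma ne02 : e0 ≠ e2 := fun h => by
  have := DFunLike.congr_fun h 0; simp [e0, e2, Finsupp.single_apply] at this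
lemma ne03 : e0 ≠ e3 := fun h => by
  have := DFunLike.congr_fun h 0; simp [e0, e3, Finsupp.single_apply] at this
lemma ne04 : e0 ≠ e4 := fun h => by
  have := DFunLike.congr_fun h 0; simp [e0, e4, Finsupp.single_apply] at this
lemma ne12 : e1 ≠ e2 := fun h => by
  have := DFunLike.congr_fun h 0; simp [e1, e2, Finsupp.single_apply] at this
lemma ne13 : e1 ≠ e3 := fun h => by
  have := DFunLike.congr_fun h 0; simp [e1, e3, Finsupp.single_apply] at this
lemma ne14 : e1 ≠ e4 := fun h => by
  have := DFunLike.congr_fun h 0; simp [e1, e4, Finsupp.single_apply] at this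
lemma ne23 : e2 ≠ e3 := fun h => by
  have := DFunLike.congr_fun h 2; simp [e2, e3, Finsupp.single_apply] at this
lemma ne24 : e2 ≠ e4 := fun h => by
  have := DFunLike.congr_fun h 2; simp [e2, e4, Finsupp.single_apply] at this
lemma ne34 : e3 ≠ e4 := fun h => by
  have := DFunLike.congr_fun h 1; simp [e3, e4, Finsupp.single_apply] at this

/-! ### The degree-2 homogeneous submodule is spanned by the 5 monomials -/

lemma whs2_eq : weightedHomogeneousSubmodule ℚ wt 2 =
    Submodule.span ℚ ({a1^2, a1 * a2', a2, a2'^2, c2} : Set P4) := by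
  apply le_antisymm
  · intro p hp
    rw [← p.support_sum_monomial_coeff]
    apply Submodule.sum_mem
    intro d hd
    have hc : MvPolynomial.coeff d p ≠ 0 := MvPolynomial.mem_support_iff.mp hd
    have hw2 : Finsupp.weight wt d = 2 := hp hc
    rw [weight_apply'] at hw2
    have key : ∀ (e : Fin 4 →₀ ℕ) (m : P4),
        m ∈ ({a1^2, a1 * a2', a2, a2'^2, c2} : Set P4) → m = monomial e 1 → d = e →
        (monomial d (MvPolynomial.coeff d p) : P4) ∈
          Submodule.span ℚ ({a1^2, a1 * a2', a2, a2'^2, c2} : Set P4) := by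
      rintro e m hm rfl rfl
      have heq : (monomial d (MvPolynomial.coeff d p) : P4)
          = MvPolynomial.coeff d p • monomial d 1 := by
        rw [MvPolynomial.smul_monomial, smul_eq_mul, mul_one]
      rw [heq]
      exact Submodule.smul_mem _ _ (Submodule.subset_span hm)
    have hm0 : a1^2 ∈ ({a1^2, a1 * a2', a2, a2'^2, c2} : Set P4) := Set.mem_insert _ _
    have hm1 : a1 * a2' ∈ ({a1^2, a1 * a2', a2, a2'^2, c2} : Set P4) :=
      Set.mem_insert_iff.mpr (Or.inr (Set.mem_insert _ _))
    have hm2 : a2 ∈ ({a1^2, a1 * a2', a2, a2'^2, c2} : Set P4) :=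
      Set.mem_insert_iff.mpr (Or.inr (Set.mem_insert_iff.mpr (Or.inr (Set.mem_insert _ _))))
    have hm3 : a2'^2 ∈ ({a1^2, a1 * a2', a2, a2'^2, c2} : Set P4) :=
      Set.mem_insert_iff.mpr (Or.inr (Set.mem_insert_iff.mpr (Or.inr
        (Set.mem_insert_iff.mpr (Or.inr (Set.mem_insert _ _))))))
    have hm4 : c2 ∈ ({a1^2, a1 * a2', a2, a2'^2, c2} : Set P4) :=
      Set.mem_insert_iff.mpr (Or.inr (Set.mem_insert_iff.mpr (Or.inr
        (Set.mem_insert_iff.mpr (Or.inr (Set.mem_insert_iff.mpr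
          (Or.inr (Set.mem_singleton _))))))))
    have hcase : (d 0 = 2 ∧ d 1 = 0 ∧ d 2 = 0 ∧ d 3 = 0) ∨
        (d 0 = 1 ∧ d 1 = 1 ∧ d 2 = 0 ∧ d 3 = 0) ∨
        (d 0 = 0 ∧ d 1 = 0 ∧ d 2 = 1 ∧ d 3 = 0) ∨
        (d 0 = 0 ∧ d 1 = 2 ∧ d 2 = 0 ∧ d 3 = 0) ∨
        (d 0 = 0 ∧ d 1 = 0 ∧ d 2 = 0 ∧ d 3 = 1) := by omega
    rcases hcase with ⟨h0, h1, h2, h3⟩ | ⟨h0, h1, h2, h3⟩ | ⟨h0, h1, h2, h3⟩ |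
      ⟨h0, h1, h2, h3⟩ | ⟨h0, h1, h2, h3⟩
    · have hde : d = e0 := by
        ext i; fin_cases i <;> simp [e0, Finsupp.single_apply, h0, h1, h2, h3]
      exact key e0 _ hm0 m0eq hde
    · have hde : d = e1 := by
        ext i; fin_cases i <;> simp [e1, Finsupp.single_apply, h0, h1, h2, h3]
      exact key e1 _ hm1 m1eq hde
    · have hde : d = e2 := by
        ext i; fin_cases i <;> simp [e2, Finsupp.single_apply, h0, h1, h2, h3]
      exact key e2 _ hm2 m2eq hde
    · have hde : d = e3 := by
        ext i; fin_cases i <;> simp [e3, Finsupp.single_apply, h0, h1, h2, h3]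
      exact key e3 _ hm3 m3eq hde
    · have hde : d = e4 := by
        ext i; fin_cases i <;> simp [e4, Finsupp.single_apply, h0, h1, h2, h3]
      exact key e4 _ hm4 m4eq hde
  · rw [Submodule.span_le]
    rintro x hx
    simp only [Set.mem_insert_iff, Set.mem_singleton_iff] at hx
    rcases hx with h | h | h | h | h <;> subst h
    · exact hw_pow hwa1 2
    · exact hwa1.mul hwa2'
    · exact hwa2
    · exact hw_pow hwa2' 2
    · exact hwc2

end HurwitzAux

open HurwitzAux in
/-- For `g > 86`, the images of `a₁², a₁a₂′, a₂, a₂′², c₂` form a `ℚ`-basis of `S(g)_2`;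
in particular `dim_ℚ S(g)_2 = 5`. -/
theorem basis_SComp_two (g : ℤ) (hg : g > 86) :
    LinearIndependent ℚ
      ![Smk g (a1^2), Smk g (a1 * a2'), Smk g a2, Smk g (a2'^2), Smk g c2] ∧
    SComp g 2 = Submodule.span ℚ
      {Smk g (a1^2), Smk g (a1 * a2'), Smk g a2, Smk g (a2'^2), Smk g c2} ∧
    Module.finrank ℚ (SComp g 2) = 5 := by
  have hli : LinearIndependent ℚ
      ![Smk g (a1^2), Smk g (a1 * a2'), Smk g a2, Smk g (a2'^2), Smk g c2] := by
    rw [Fintype.linearIndependent_iff]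
    intro c hc
    set q : P4 := c 0 • a1^2 + c 1 • (a1 * a2') + c 2 • a2 + c 3 • a2'^2 + c 4 • c2 with hqdef
    have hsum : Smk g q = 0 := by
      simp only [hqdef, map_add, map_smul]
      simpa [Fin.sum_univ_five] using hc
    have hmem : q ∈ Jg g := by
      have hrfl : Smk g q = Ideal.Quotient.mk (Jg g) q := rfl
      rwa [hrfl, Ideal.Quotient.eq_zero_iff_mem] at hsum
    have hlow := Jg_le_lowI g hmem
    rw [mem_lowI] at hlow
    have hq' : q = monomial e0 (c 0) + monomial e1 (c 1) + monomial e2 (c 2)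
        + monomial e3 (c 3) + monomial e4 (c 4) := by
      rw [hqdef, m0eq, m1eq, m2eq, m3eq, m4eq]
      simp only [MvPolynomial.smul_monomial, smul_eq_mul, mul_one]
    have h0 := hlow e0 (le_of_eq we0)
    have h1 := hlow e1 (le_of_eq we1)
    have h2 := hlow e2 (le_of_eq we2)
    have h3 := hlow e3 (le_of_eq we3)
    have h4 := hlow e4 (le_of_eq we4)
    rw [hq'] at h0 h1 h2 h3 h4
    simp only [MvPolynomial.coeff_add, MvPolynomial.coeff_monomial,
      if_pos rfl, if_neg ne01, if_neg ne02, if_neg ne03, if_neg ne04,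
      if_neg ne01.symm, if_neg ne02.symm, if_neg ne03.symm, if_neg ne04.symm,
      if_neg ne12, if_neg ne13, if_neg ne14, if_neg ne12.symm, if_neg ne13.symm,
      if_neg ne14.symm, if_neg ne23, if_neg ne24, if_neg ne23.symm, if_neg ne24.symm,
      if_neg ne34, if_neg ne34.symm, add_zero, zero_add] at h0 h1 h2 h3 h4
    intro i
    fin_cases i
    · exact h0
    · exact h1
    · exact h2
    · exact h3
    · exact h4
  have hspan : SComp g 2 = Submodule.span ℚ
      {Smk g (a1^2), Smk g (a1 * a2'), Smk g a2, Smk g (a2'^2), Smk g c2} := by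
    rw [SComp, whs2_eq, Submodule.map_span]
    congr 1
    simp only [Set.image_insert_eq, Set.image_singleton]
  refine ⟨hli, hspan, ?_⟩
  have hrange : Set.range ![Smk g (a1^2), Smk g (a1 * a2'), Smk g a2, Smk g (a2'^2), Smk g c2]
      = ({Smk g (a1^2), Smk g (a1 * a2'), Smk g a2, Smk g (a2'^2), Smk g c2} :
        Set (P4 ⧸ Jg g)) := by
    ext x
    simp only [Matrix.range_cons, Matrix.range_empty, Set.union_empty, Set.singleton_union,
      Set.mem_insert_iff, Set.mem_singleton_iff]
  rw [show (SComp g 2 : Submodule ℚ (P4 ⧸ Jg g)) = _ from hspan, ← hrange]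
  simpa using finrank_span_eq_card hli
end
end

section
/- For every integer g, the ideal J(g) is contained in the ideal of P generated by a₁², a₂, and c₂; consequently, for every integer i ≥ 1 the images of a₂′^i and a₁·a₂′^(i−1) in S(g) are linearly independent over ℚ (in particular both are nonzero). -/
open MvPolynomial

noncomputable section

/-! Every monomial of each `rᵢ` is divisible by `a₁²`, `a₂` or `c₂`. The ring map
`P → ℚ[ε]`, `a₁ ↦ ε`, `a₂′ ↦ 1`, `a₂, c₂ ↦ 0`, kills `a₁²`, `a₂` and `c₂`, hence `J(g)`, so it
factors through `S(g)`; it sends `a₂′^i` and `a₁·a₂′^(i−1)` to `1` and `ε`, which are linearly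
independent. -/

theorem Jg_generators_mem_span (g : ℤ) :
    ∀ r ∈ ({r1 g, r2 g, r3 g, r4 g, r5 g} : Set P4),
      r ∈ Ideal.span ({a1^2, a2, c2} : Set P4) := by
  set I := Ideal.span ({a1^2, a2, c2} : Set P4)
  have mk_eq_zero {p : P4} (hp : p ∈ ({a1^2, a2, c2} : Set P4)) : Ideal.Quotient.mk I p = 0 :=
    Ideal.Quotient.eq_zero_iff_mem.mpr (Ideal.subset_span hp)
  have h2 : Ideal.Quotient.mk I a1 ^ 2 = 0 := by
    rw [← map_pow]; exact mk_eq_zero (by simp)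
  have h3 : Ideal.Quotient.mk I a1 ^ 3 = 0 := pow_eq_zero_of_le (by norm_num) h2
  have h4 : Ideal.Quotient.mk I a1 ^ 4 = 0 := pow_eq_zero_of_le (by norm_num) h2
  have ha2 : Ideal.Quotient.mk I a2 = 0 := mk_eq_zero (by simp)
  have hc2 : Ideal.Quotient.mk I c2 = 0 := mk_eq_zero (by simp)
  intro r hr
  rw [← Ideal.Quotient.eq_zero_iff_mem]
  rcases hr with rfl | rfl | rfl | rfl | rfl <;>
    simp [r1, r2, r3, r4, r5, h2, h3, h4, ha2, hc2]

theorem Jg_le_span (g : ℤ) : Jg g ≤ Ideal.span ({a1^2, a2, c2} : Set P4) :=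
  Ideal.span_le.mpr (Jg_generators_mem_span g)

theorem DualNumber.linearIndependent_one_eps {R : Type*} [Ring R] :
    LinearIndependent R ![(1 : DualNumber R), DualNumber.eps] := by
  rw [LinearIndependent.pair_iff]
  intro s t h
  exact ⟨by simpa using congrArg TrivSqZeroExt.fst h, by simpa using congrArg TrivSqZeroExt.snd h⟩

def evalDual : P4 →ₐ[ℚ] DualNumber ℚ := aeval ![DualNumber.eps, 1, 0, 0]

theorem span_le_ker_evalDual : Ideal.span ({a1^2, a2, c2} : Set P4) ≤ RingHom.ker evalDual := by
  rw [Ideal.span_le]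
  rintro p (rfl | rfl | rfl) <;> simp [evalDual, a1, a2, c2, sq]

def liftDual (g : ℤ) : P4 ⧸ Jg g →ₐ[ℚ] DualNumber ℚ :=
  Ideal.Quotient.liftₐ (Jg g) evalDual fun _ hp ↦ span_le_ker_evalDual (Jg_le_span g hp)

theorem liftDual_Smk (g : ℤ) (p : P4) : liftDual g (Smk g p) = evalDual p := rfl

/-- For every `g`, `J(g) ⊆ (a₁², a₂, c₂)`; consequently, for every `i ≥ 1` the images
of `a₂′^i` and `a₁·a₂′^(i−1)` in `S(g)` are linearly independent over `ℚ`. -/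
theorem Jg_le_span_and_linearIndependent (g : ℤ) :
    Jg g ≤ Ideal.span ({a1^2, a2, c2} : Set P4) ∧
    ∀ i : ℕ, 1 ≤ i → LinearIndependent ℚ ![Smk g (a2'^i), Smk g (a1 * a2'^(i-1))] := by
  refine ⟨Jg_le_span g, fun i _ ↦ LinearIndependent.of_comp (liftDual g).toLinearMap ?_⟩
  have h_one : liftDual g (Smk g (a2'^i)) = 1 := by simp [liftDual_Smk, evalDual, a2']
  have h_eps : liftDual g (Smk g (a1 * a2'^(i-1))) = DualNumber.eps := by
    simp [liftDual_Smk, evalDual, a1, a2']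
  have h_comp : (liftDual g).toLinearMap ∘ ![Smk g (a2'^i), Smk g (a1 * a2'^(i-1))] =
      ![1, DualNumber.eps] := by
    funext j; fin_cases j <;> simp [h_one, h_eps]
  rw [h_comp]
  exact DualNumber.linearIndependent_one_eps
end
end
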